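/- Let r ∈ R and let A ∈ J(R) be a constructible right ideal. (1) If A contains r x_{n_1} and r x_{n_2} for some n_1 ≠ n_2 (or contains r y_{n_1} and r y_{n_2} for some n_1 ≠ n_2), then A contains r x_n and r y_n for all n ∈ ℤ. (2) If A contains r x_{n_1} t_1 and r x_{n_2} t_2 for some n_1 ≠ n_2 and t_1, t_2 ∈ R, then A contains the set r · (⋃_{n ∈ ℤ, w' ∈ R ∖ {e}} x_n w' R); symmetrically, if A contains r y_{n_1} t_1 and r y_{n_2} t_2 with n_1 ≠ n_2, then A contains r · (⋃_{n ∈ ℤ, w' ∈ R ∖ {e}} y_n w' R). -/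

import Mathlib

open scoped Classical

namespace SgC

variable {M : Type*}

/-- Composition of partial maps (`g` after `f`). -/
def pcomp (g f : M → Option M) : M → Option M := fun s => (f s).bind g

/-- The canonical partial inverse of a partial map (the genuine inverse when the map
is injective on its domain, as is the case for all maps in the left inverse hull of a
left cancellative monoid). -/
noncomputable def pinv (f : M → Option M) : M → Option M :=
  fun t => if h : ∃ s, f s = some t then some h.choose else none

/-- Left translation `t ↦ s * t` as an everywhere-defined partial map. -/
def ptransl [Mul M] (s : M) : M → Option M := fun t => some (s * t)

/-- The identity partial map. -/
def pid : M → Option M := fun s => some s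

/-- The block `q⁻¹ ∘ p`: first multiply on the left by `p`, then remove `q` on the left. -/
noncomputable def pblock [Mul M] (p : M × M) : M → Option M :=
  pcomp (pinv (ptransl p.2)) (ptransl p.1)

/-- Membership in the left inverse hull `I_ℓ(M)`: `h` is of the form
`s₂ₙ⁻¹ s₂ₙ₋₁ ⋯ s₂⁻¹ s₁` for some `n ≥ 1` and `sᵢ ∈ M` (the list records the pairs
`(s₁,s₂), (s₃,s₄), …`, applied left to right). -/
def InInvHull [Mul M] (h : M → Option M) : Prop :=
  ∃ l : List (M × M), l ≠ [] ∧
    h = l.foldl (fun acc p => pcomp (pblock p) acc) pid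

/-- Membership in the inverse hull generated by translations by elements of `σ` only
(used for canonical copies of `I_ℓ(S)` inside partial maps of a larger monoid). -/
def InInvHullOn [Mul M] (σ : Set M) (h : M → Option M) : Prop :=
  ∃ l : List (M × M), l ≠ [] ∧ (∀ p ∈ l, p.1 ∈ σ ∧ p.2 ∈ σ) ∧
    h = l.foldl (fun acc p => pcomp (pblock p) acc) pid

/-- Domain of a partial map. -/
def pdom (h : M → Option M) : Set M := {s | h s ≠ none}

/-- `h` fixes the set `Y` pointwise (in particular `Y ⊆ dom h`). -/
def PFixes (h : M → Option M) (Y : Set M) : Prop := ∀ s ∈ Y, h s = some s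

/-- Preimage of a set under a partial map. -/
def ppre (h : M → Option M) (X : Set M) : Set M := {s | ∃ x ∈ X, h s = some x}

/-- Constructible right ideals: domains of elements of the left inverse hull. -/
def IsConstructible [Mul M] (X : Set M) : Prop := ∃ h, InInvHull h ∧ X = pdom h

/-- Membership in `J̄(S)`: sets of the form `X₀` or `X₀ ∖ (X₁ ∪ ⋯ ∪ Xₘ)` with all
`Xᵢ` constructible. -/
def IsConstructibleBar [Mul M] (X : Set M) : Prop :=
  ∃ (X₀ : Set M) (m : ℕ) (Xi : Fin m → Set M),
    IsConstructible X₀ ∧ (∀ i, IsConstructible (Xi i)) ∧ X = X₀ \ ⋃ i, Xi i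

/-- `Xi` is a foundation family for `X`: each `Xi i ⊆ X` and every nonempty
constructible right ideal contained in `X` intersects some `Xi i`. -/
def IsFoundation [Mul M] (X : Set M) {ι : Type*} (Xi : ι → Set M) : Prop :=
  (∀ i, Xi i ⊆ X) ∧
  ∀ Y : Set M, IsConstructible Y → Y.Nonempty → Y ⊆ X → ∃ i, (Y ∩ Xi i).Nonempty

/-- Strong C*-regularity. -/
def StronglyRegular (M : Type*) [Monoid M] : Prop :=
  ∀ (n : ℕ) (h : Fin n → M → Option M), (∀ k, InInvHull (h k)) →
  ∀ (m : ℕ) (X : Set M) (Xi : Fin m → Set M),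
    IsConstructible X → (∀ i, IsConstructible (Xi i)) →
    (X \ ⋃ i, Xi i).Nonempty →
    (X \ ⋃ i, Xi i) ⊆ ⋃ k, {s | h k s = some s} →
    ∃ (l : ℕ) (Y : Fin l → Set M) (kk : Fin l → Fin n),
      (∀ j, IsConstructible (Y j)) ∧
      (X \ ⋃ i, Xi i) ⊆ ⋃ j, Y j ∧
      ∀ j, PFixes (h (kk j)) (Y j)

/-- C*-regularity. -/
def Regular (M : Type*) [Monoid M] : Prop :=
  ∀ (n : ℕ) (h : Fin n → M → Option M), (∀ k, InInvHull (h k)) →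
  ∀ X : Set M, IsConstructibleBar X → X.Nonempty →
    X ⊆ ⋃ k, {s | h k s = some s} →
    ∃ (l : ℕ) (Y : Fin l → Set M) (kk : Fin l → Fin n),
      (∀ j, IsConstructibleBar (Y j)) ∧ X ⊆ ⋃ j, Y j ∧
      ∀ j, PFixes (h (kk j)) (Y j)

/-- Strong C*-regularity on the boundary. -/
def StronglyRegularOnBoundary (M : Type*) [Monoid M] : Prop :=
  ∀ (n : ℕ) (h : Fin n → M → Option M), (∀ k, InInvHull (h k)) →
  ∀ (m : ℕ) (X : Set M) (Xi : Fin m → Set M),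
    IsConstructible X → (∀ i, IsConstructible (Xi i)) → (∀ i, Xi i ⊆ X) →
    (X \ ⋃ i, Xi i).Nonempty →
    (X \ ⋃ i, Xi i) ⊆ ⋃ k, {s | h k s = some s} →
    ∃ (l : ℕ) (Y : Fin l → Set M) (kk : Fin l → Fin n),
      (∀ j, IsConstructible (Y j)) ∧ (∀ j, PFixes (h (kk j)) (Y j)) ∧
      IsFoundation X (Sum.elim Xi Y)

/-- C*-regularity on the boundary. -/
def RegularOnBoundary (M : Type*) [Monoid M] : Prop :=
  ∀ (n : ℕ) (h : Fin n → M → Option M), (∀ k, InInvHull (h k)) →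
  ∀ (m : ℕ) (X : Set M) (Xi : Fin m → Set M),
    IsConstructible X → (∀ i, IsConstructible (Xi i)) → (∀ i, Xi i ⊆ X) →
    (X \ ⋃ i, Xi i).Nonempty →
    (X \ ⋃ i, Xi i) ⊆ ⋃ k, {s | h k s = some s} →
    ∃ (l : ℕ) (Y : Fin l → Set M) (kk : Fin l → Fin n),
      (∀ j, IsConstructibleBar (Y j)) ∧ (∀ j, PFixes (h (kk j)) (Y j)) ∧
      IsFoundation X (Sum.elim Xi Y)

/-- The type of constructible right ideals `J(M)`. -/
def CIdeal (M : Type*) [Mul M] : Type _ := {X : Set M // IsConstructible X}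

/-- The character space `{0,1}^{J(M)}` with the topology of pointwise convergence. -/
abbrev CharSpace (M : Type*) [Mul M] : Type _ := CIdeal M → Bool

/-- The principal character `χ_s`. -/
noncomputable def princhar [Mul M] (s : M) : CharSpace M :=
  fun X => decide (s ∈ X.1)

/-- `Ω(M)`: the closure of the set of principal characters. -/
noncomputable def Omega (M : Type*) [Mul M] : Set (CharSpace M) :=
  closure (Set.range (princhar : M → CharSpace M))

/-- Filters on `J(M)`: nonempty collections of nonempty constructible ideals closed
under intersections and enlargements within `J(M)`. -/
def IsFilterOn [Mul M] (F : Set (CIdeal M)) : Prop :=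
  F.Nonempty ∧ (∀ X ∈ F, (X.1 : Set M).Nonempty) ∧
  (∀ X ∈ F, ∀ Y ∈ F, ∀ Z : CIdeal M, Z.1 = X.1 ∩ Y.1 → Z ∈ F) ∧
  (∀ X ∈ F, ∀ Y : CIdeal M, X.1 ⊆ Y.1 → Y ∈ F)

/-- Nonzero multiplicative `{0,1}`-valued maps on `J(M)`. -/
def IsChar [Mul M] (χ : CharSpace M) : Prop :=
  (∃ X, χ X = true) ∧
  ∀ X Y Z : CIdeal M, Z.1 = X.1 ∩ Y.1 → χ Z = (χ X && χ Y)

/-- Maximal characters: characters whose associated filter is maximal among filters. -/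
def IsMaximalChar [Mul M] (χ : CharSpace M) : Prop :=
  IsChar χ ∧ IsFilterOn {X | χ X = true} ∧
  ∀ G : Set (CIdeal M), IsFilterOn G → {X | χ X = true} ⊆ G → G = {X | χ X = true}

/-- The set of maximal characters `Ω_max(M)`. -/
def OmegaMax (M : Type*) [Mul M] : Set (CharSpace M) := {χ | IsMaximalChar χ}

/-- The boundary `∂Ω(M)`: the closure of the set of maximal characters. -/
noncomputable def BoundaryOmega (M : Type*) [Mul M] : Set (CharSpace M) :=
  closure (OmegaMax M)


/-! ### The monoid `R` -/

/-- Generators of the monoid `R`. -/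
inductive Gen : Type
  | a : Gen
  | b : Gen
  | c : Gen
  | d : Gen
  | f : Gen
  | x : ℤ → Gen
  | y : ℤ → Gen

/-- The defining relations of the monoid `R`. -/
inductive RRel : FreeMonoid Gen → FreeMonoid Gen → Prop
  | abx (n : ℤ) : RRel (FreeMonoid.of Gen.a * FreeMonoid.of Gen.b * FreeMonoid.of (Gen.x n))
      (FreeMonoid.of Gen.b * FreeMonoid.of (Gen.x n))
  | aby (n : ℤ) : RRel (FreeMonoid.of Gen.a * FreeMonoid.of Gen.b * FreeMonoid.of (Gen.y n))
      (FreeMonoid.of Gen.b * FreeMonoid.of (Gen.y (n + 1)))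
  | cbx (n : ℤ) : RRel (FreeMonoid.of Gen.c * FreeMonoid.of Gen.b * FreeMonoid.of (Gen.x n))
      (FreeMonoid.of Gen.b * FreeMonoid.of (Gen.x (n + 1)))
  | cby (n : ℤ) : RRel (FreeMonoid.of Gen.c * FreeMonoid.of Gen.b * FreeMonoid.of (Gen.y n))
      (FreeMonoid.of Gen.b * FreeMonoid.of (Gen.y n))
  | dbx (n : ℤ) (z : Gen) :
      RRel (FreeMonoid.of Gen.d * FreeMonoid.of Gen.b * FreeMonoid.of (Gen.x n) * FreeMonoid.of z)
        (FreeMonoid.of Gen.b * FreeMonoid.of (Gen.x n) * FreeMonoid.of z)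
  | fby (n : ℤ) (z : Gen) :
      RRel (FreeMonoid.of Gen.f * FreeMonoid.of Gen.b * FreeMonoid.of (Gen.y n) * FreeMonoid.of z)
        (FreeMonoid.of Gen.b * FreeMonoid.of (Gen.y n) * FreeMonoid.of z)

/-- The monoid `R`: the quotient of the free monoid on the generators by the congruence
generated by the defining relations. -/
def R : Type := (conGen RRel).Quotient

noncomputable instance : Monoid R := inferInstanceAs (Monoid (conGen RRel).Quotient)

/-- The quotient map from the free monoid on the generators onto `R`. -/
def qR : FreeMonoid Gen →* R := Con.mk' _

/-- The image in `R` of a generator. -/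
noncomputable def gen (g : Gen) : R := qR (FreeMonoid.of g)

/-- A word contains a forbidden factor. -/
def IsForbidden (w : FreeMonoid Gen) : Prop :=
  ∃ n : ℤ,
    w = FreeMonoid.of Gen.a * FreeMonoid.of Gen.b * FreeMonoid.of (Gen.x n) ∨
    w = FreeMonoid.of Gen.a * FreeMonoid.of Gen.b * FreeMonoid.of (Gen.y n) ∨
    w = FreeMonoid.of Gen.c * FreeMonoid.of Gen.b * FreeMonoid.of (Gen.x n) ∨
    w = FreeMonoid.of Gen.c * FreeMonoid.of Gen.b * FreeMonoid.of (Gen.y n) ∨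
    w = FreeMonoid.of Gen.d * FreeMonoid.of Gen.b * FreeMonoid.of (Gen.x n) ∨
    w = FreeMonoid.of Gen.f * FreeMonoid.of Gen.b * FreeMonoid.of (Gen.y n)

/-- A word is reduced if it contains no forbidden factor. -/
def ReducedWord (u : FreeMonoid Gen) : Prop :=
  ¬ ∃ p w s : FreeMonoid Gen, IsForbidden w ∧ u = p * w * s

/-- The prefix word `w₁ w₂ ⋯ wₙ` of an infinite word. -/
def prefixWord (w : ℕ → Gen) (n : ℕ) : FreeMonoid Gen :=
  FreeMonoid.ofList ((List.range n).map w)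


/-!
The relations of `R` only ever absorb a letter `a`, `c`, `d` or `f` into a factor `b ℓₙ`
(`ℓ ∈ {x, y}`), shifting the index `n`; so prepending generators to words yields normal forms, and
`R` is left cancellative. Left multiplication by a fixed element acts on the families `w ℓₙ t`
(`t ≠ e`) and `w ℓₙ` uniformly in `n`: it rewrites the prefix and shifts the index by a constant,
and on the family `w ℓₙ` the new prefix is the same for `ℓ = x` and `ℓ = y`. Hence if `q R`
contains two members of such a family with distinct indices, `q⁻¹` maps the whole family uniformly
onto another one; for a generator `q` this fails only when `q` is the letter `ℓₙ` itself, which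
two distinct indices rule out. These uniformity properties survive composition, so every element
of `I_ℓ(R)` has them, and its domain contains a whole family once it contains two of its members.
Since the domain is a right ideal, the tails `t₁`, `t₂` of the hypothesis may be taken `≠ e`.
-/

section PartialMaps

variable {M : Type*}

lemma pcomp_apply (g f : M → Option M) (s : M) : pcomp g f s = (f s).bind g := rfl

lemma pcomp_ne_none {g f : M → Option M} {s : M} :
    pcomp g f s ≠ none ↔ ∃ v, f s = some v ∧ g v ≠ none := by
  cases h : f s <;> simp [pcomp_apply, h]

lemma pcomp_eq_some {g f : M → Option M} {s u : M} :
    pcomp g f s = some u ↔ ∃ v, f s = some v ∧ g v = some u := by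
  simp only [pcomp_apply, Option.bind_eq_some_iff]

variable [Monoid M]

lemma pid_eq_ptransl_one : (pid : M → Option M) = ptransl 1 := by
  funext s; simp [pid, ptransl]

theorem InInvHull.induction {Φ : (M → Option M) → Prop}
    (hcomp : ∀ g f, Φ g → Φ f → Φ (pcomp g f)) (htransl : ∀ s, Φ (ptransl s))
    (hinv : ∀ s, Φ (pinv (ptransl s))) {h : M → Option M} (hh : InInvHull h) : Φ h := by
  obtain ⟨l, -, rfl⟩ := hh
  suffices ∀ acc, Φ acc → Φ (l.foldl (fun acc p => pcomp (pblock p) acc) acc) from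
    this pid (by rw [pid_eq_ptransl_one]; exact htransl 1)
  induction l with
  | nil => exact fun _ h => h
  | cons p l ih => exact fun acc h => ih _ (hcomp _ _ (hcomp _ _ (hinv _) (htransl _)) h)

def IsRightEquivariant (h : M → Option M) : Prop :=
  ∀ z v s, h z = some v → h (z * s) = some (v * s)

lemma IsRightEquivariant.pcomp {g f : M → Option M} (hg : IsRightEquivariant g)
    (hf : IsRightEquivariant f) : IsRightEquivariant (pcomp g f) := by
  intro z u s h
  obtain ⟨v, hv, hu⟩ := pcomp_eq_some.mp h
  exact pcomp_eq_some.mpr ⟨_, hf _ _ _ hv, hg _ _ _ hu⟩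

lemma isRightEquivariant_ptransl (q : M) : IsRightEquivariant (ptransl q) := by
  intro z v s h
  simp only [ptransl, Option.some.injEq] at h ⊢
  rw [← h, mul_assoc]

variable [IsLeftCancelMul M]

lemma pinv_ptransl_eq_some {q t u : M} : pinv (ptransl q) t = some u ↔ q * u = t := by
  unfold pinv
  split_ifs with h
  · have hq : q * h.choose = t := Option.some.inj h.choose_spec
    rw [Option.some.injEq]
    exact ⟨fun hu => hu ▸ hq, fun hu => mul_left_cancel (hq.trans hu.symm)⟩
  · exact ⟨nofun, fun hu => (h ⟨u, congrArg some hu⟩).elim⟩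

lemma pinv_ptransl_mul (q q' : M) :
    pinv (ptransl (q * q')) = pcomp (pinv (ptransl q')) (pinv (ptransl q)) := by
  funext t
  refine Option.ext fun u => ?_
  simp only [pcomp_eq_some, pinv_ptransl_eq_some, mul_assoc]
  exact ⟨fun h => ⟨_, h, rfl⟩, fun ⟨_, h, hv⟩ => hv ▸ h⟩

lemma pinv_ptransl_one : pinv (ptransl (1 : M)) = ptransl 1 := by
  funext t
  refine Option.ext fun u => ?_
  rw [pinv_ptransl_eq_some, ptransl, one_mul, one_mul, Option.some.injEq, eq_comm]

lemma isRightEquivariant_pinv_ptransl (q : M) : IsRightEquivariant (pinv (ptransl q)) := by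
  intro z v s h
  rw [pinv_ptransl_eq_some] at h ⊢
  rw [← h, mul_assoc]

lemma InInvHull.isRightEquivariant {h : M → Option M} (hh : InInvHull h) :
    IsRightEquivariant h :=
  hh.induction (fun _ _ => .pcomp) isRightEquivariant_ptransl isRightEquivariant_pinv_ptransl

lemma IsConstructible.mul_mem_right {X : Set M} (hX : IsConstructible X) {z : M} (hz : z ∈ X)
    (s : M) : z * s ∈ X := by
  obtain ⟨h, hh, rfl⟩ := hX
  obtain ⟨v, hv⟩ := Option.ne_none_iff_exists'.mp hz
  simp [pdom, hh.isRightEquivariant _ _ s hv]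

end PartialMaps

inductive Fam
  | x
  | y

def Fam.gen : Fam → ℤ → Gen
  | .x => Gen.x
  | .y => Gen.y

lemma Fam.gen_ne_b (ℓ : Fam) (n : ℤ) : ℓ.gen n ≠ Gen.b := by
  cases ℓ <;> nofun

lemma Fam.gen_inj {ℓ ℓ' : Fam} {n n' : ℤ} : ℓ.gen n = ℓ'.gen n' ↔ ℓ = ℓ' ∧ n = n' := by
  cases ℓ <;> cases ℓ' <;> simp [Fam.gen]

/-- `absorbShift g ℓ e = some k` encodes the defining relation `g·b·ℓₙ = b·ℓₙ₊ₖ` of `R`, applied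
to a word `b ℓₙ t` with `e = t.isEmpty` (the relations for `d` and `f` need a letter after `ℓₙ`). -/
def absorbShift : Gen → Fam → Bool → Option ℤ
  | .a, .x, _ => some 0
  | .a, .y, _ => some 1
  | .c, .x, _ => some 1
  | .c, .y, _ => some 0
  | .d, .x, false => some 0
  | .f, .y, false => some 0
  | _, _, _ => none

def consNF (g : Gen) : List Gen → List Gen
  | .b :: .x n :: t =>
    (absorbShift g .x t.isEmpty).elim (g :: .b :: .x n :: t) fun k => .b :: .x (n + k) :: t
  | .b :: .y n :: t =>
    (absorbShift g .y t.isEmpty).elim (g :: .b :: .y n :: t) fun k => .b :: .y (n + k) :: t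
  | U => g :: U

lemma consNF_b_gen (g : Gen) (ℓ : Fam) (n : ℤ) (t : List Gen) :
    consNF g (.b :: ℓ.gen n :: t) = (absorbShift g ℓ t.isEmpty).elim (g :: .b :: ℓ.gen n :: t)
      fun k => .b :: ℓ.gen (n + k) :: t := by
  cases ℓ <;> rfl

lemma consNF_of_absorbShift {g : Gen} {ℓ : Fam} {t : List Gen} {k : ℤ}
    (hk : absorbShift g ℓ t.isEmpty = some k) (n : ℤ) :
    consNF g (.b :: ℓ.gen n :: t) = .b :: ℓ.gen (n + k) :: t := by
  simp [consNF_b_gen, hk]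

lemma consNF_of_forall {g : Gen} {U : List Gen}
    (h : ∀ ℓ n t, U = .b :: ℓ.gen n :: t → absorbShift g ℓ t.isEmpty = none) :
    consNF g U = g :: U := by
  unfold consNF
  split
  · simp [h .x _ _ rfl]
  · simp [h .y _ _ rfl]
  · rfl

lemma consNF_eq_cons_of_not_absorbs {g : Gen} (hg : ∀ ℓ e, absorbShift g ℓ e = none)
    (U : List Gen) : consNF g U = g :: U :=
  consNF_of_forall fun ℓ _ t _ => hg ℓ t.isEmpty

@[simp] lemma consNF_b (U : List Gen) : consNF .b U = .b :: U :=
  consNF_eq_cons_of_not_absorbs (fun ℓ e => by cases ℓ <;> rfl) U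

@[simp] lemma consNF_gen (ℓ : Fam) (n : ℤ) (U : List Gen) :
    consNF (ℓ.gen n) U = ℓ.gen n :: U :=
  consNF_eq_cons_of_not_absorbs (fun ℓ' e => by cases ℓ <;> cases ℓ' <;> rfl) U

lemma consNF_cases (g : Gen) (U : List Gen) :
    consNF g U = g :: U ∨ ∃ ℓ n t k, U = .b :: ℓ.gen n :: t ∧
      absorbShift g ℓ t.isEmpty = some k ∧ consNF g U = .b :: ℓ.gen (n + k) :: t := by
  by_cases hU : ∃ ℓ n t k, U = .b :: ℓ.gen n :: t ∧ absorbShift g ℓ t.isEmpty = some k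
  · obtain ⟨ℓ, n, t, k, rfl, hk⟩ := hU
    exact .inr ⟨ℓ, n, t, k, rfl, hk, consNF_of_absorbShift hk n⟩
  · refine .inl (consNF_of_forall fun ℓ n t hUt => ?_)
    exact Option.eq_none_iff_forall_ne_some.mpr fun k hk => hU ⟨ℓ, n, t, k, hUt, hk⟩

lemma consNF_ne_nil (g : Gen) (U : List Gen) : consNF g U ≠ [] := by
  rcases consNF_cases g U with h | ⟨_, _, _, _, _, _, h⟩ <;> simp [h]

lemma consNF_injective (g : Gen) : Function.Injective (consNF g) := by
  have absorbed_ne_cons : ∀ {U ℓ n t k}, absorbShift g ℓ t.isEmpty = some k →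
      g :: U ≠ .b :: ℓ.gen (n + k) :: t := by
    rintro U ℓ n t k hk h
    cases (List.cons.inj h).1
    cases ℓ <;> simp [absorbShift] at hk
  intro U V h
  rcases consNF_cases g U with hU | ⟨ℓ, n, t, k, rfl, hk, hU⟩ <;>
    rcases consNF_cases g V with hV | ⟨ℓ', n', t', k', rfl, hk', hV⟩ <;> rw [hU, hV] at h
  · exact (List.cons.inj h).2
  · exact absurd h (absorbed_ne_cons hk')
  · exact absurd h.symm (absorbed_ne_cons hk)
  · simp only [List.cons.injEq, true_and, Fam.gen_inj] at h
    obtain ⟨⟨rfl, hn⟩, rfl⟩ := h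
    obtain rfl : k = k' := Option.some.inj (hk.symm.trans hk')
    rw [add_right_cancel hn]

lemma qR_of (g : Gen) : qR (FreeMonoid.of g) = gen g := rfl

lemma gen_mul_b_gen_of_absorbShift {g : Gen} {ℓ : Fam} {t : List Gen} {k : ℤ}
    (hk : absorbShift g ℓ t.isEmpty = some k) (n : ℤ) :
    gen g * (gen .b * (gen (ℓ.gen n) * (t.map gen).prod)) =
      gen .b * (gen (ℓ.gen (n + k)) * (t.map gen).prod) := by
  have rel : ∀ {u v}, RRel u v → qR u = qR v := fun h => (Con.eq _).mpr (.of _ _ h)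
  have abx (n) := rel (RRel.abx n)
  have aby (n) := rel (RRel.aby n)
  have cbx (n) := rel (RRel.cbx n)
  have cby (n) := rel (RRel.cby n)
  have dbx (n z) := rel (RRel.dbx n z)
  have fby (n z) := rel (RRel.fby n z)
  simp only [map_mul, qR_of] at abx aby cbx cby dbx fby
  cases g <;> cases ℓ <;> rcases t with _ | ⟨z, t⟩ <;>
    simp only [absorbShift, List.isEmpty_nil, List.isEmpty_cons, reduceCtorEq,
      Option.some.injEq] at hk <;> subst hk <;>
    simp [Fam.gen, ← mul_assoc, abx, aby, cbx, cby, dbx, fby]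

lemma prod_map_gen_consNF (g : Gen) (U : List Gen) :
    ((consNF g U).map gen).prod = gen g * (U.map gen).prod := by
  rcases consNF_cases g U with h | ⟨ℓ, n, t, k, rfl, hk, h⟩ <;> rw [h]
  · simp
  · simpa using (gen_mul_b_gen_of_absorbShift hk n).symm

lemma consNF_respects_rel {u v : FreeMonoid Gen} (h : RRel u v) :
    FreeMonoid.lift (M := Function.End (List Gen)) consNF u =
      FreeMonoid.lift (M := Function.End (List Gen)) consNF v := by
  have absorb : ∀ {g ℓ k m} (n) (V : List Gen), absorbShift g ℓ V.isEmpty = some k →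
      n + k = m → consNF g (consNF .b (consNF (ℓ.gen n) V)) = consNF .b (consNF (ℓ.gen m) V) := by
    rintro g ℓ k m n V hk rfl
    simp [consNF_of_absorbShift hk]
  have tail_ne_nil (z U) : (consNF z U).isEmpty = false := by
    simpa using consNF_ne_nil z U
  funext U
  cases h with
  | abx n => exact absorb (g := .a) (ℓ := .x) n U rfl (add_zero n)
  | aby n => exact absorb (g := .a) (ℓ := .y) n U rfl rfl
  | cbx n => exact absorb (g := .c) (ℓ := .x) n U rfl rfl
  | cby n => exact absorb (g := .c) (ℓ := .y) n U rfl (add_zero n)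
  | dbx n z => exact absorb (g := .d) (ℓ := .x) n _ (tail_ne_nil z U ▸ rfl) (add_zero n)
  | fby n z => exact absorb (g := .f) (ℓ := .y) n _ (tail_ne_nil z U ▸ rfl) (add_zero n)

noncomputable def act : R →* Function.End (List Gen) :=
  (conGen RRel).lift (FreeMonoid.lift consNF)
    (Con.conGen_le.mpr fun _ _ h => (Con.ker_rel _).mpr (consNF_respects_rel h))

lemma act_gen (g : Gen) (U : List Gen) : act (gen g) U = consNF g U := rfl

lemma act_mul (r s : R) (U : List Gen) : act (r * s) U = act r (act s U) := by
  rw [map_mul]; rfl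

@[simp] lemma act_one (U : List Gen) : act 1 U = U := rfl

@[elab_as_elim]
theorem R.induction_on {P : R → Prop} (r : R) (one : P 1)
    (gen_mul : ∀ g r, P r → P (gen g * r)) : P r := by
  obtain ⟨w, rfl⟩ := (conGen RRel).mk'_surjective r
  induction w using FreeMonoid.inductionOn' with
  | one => exact one
  | of_mul g w ih => rw [map_mul]; exact gen_mul g _ ih

lemma prod_map_gen_act (r : R) (U : List Gen) :
    ((act r U).map gen).prod = r * (U.map gen).prod := by
  induction r using R.induction_on with
  | one => simp
  | gen_mul g r ih => rw [act_mul, act_gen, prod_map_gen_consNF, ih, mul_assoc]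

lemma act_injective (r : R) : Function.Injective (act r) := by
  induction r using R.induction_on with
  | one => exact fun _ _ h => h
  | gen_mul g r ih =>
    exact fun U V h => ih (consNF_injective g (by simpa only [act_mul, act_gen] using h))

noncomputable def nf (r : R) : List Gen := act r []

@[simp] lemma nf_one : nf 1 = [] := rfl

lemma nf_mul (r s : R) : nf (r * s) = act r (nf s) := act_mul r s []

@[simp] lemma prod_map_gen_nf (r : R) : ((nf r).map gen).prod = r := by
  simpa [nf] using prod_map_gen_act r []

lemma nf_injective : Function.Injective nf :=
  Function.LeftInverse.injective (g := fun l : List Gen => (l.map gen).prod) prod_map_gen_nf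

lemma nf_eq_nil {r : R} : nf r = [] ↔ r = 1 :=
  ⟨fun h => by rw [← prod_map_gen_nf r, h]; rfl, fun h => h ▸ rfl⟩

instance : IsLeftCancelMul R where
  mul_left_cancel q u v h :=
    nf_injective (act_injective q (by rw [← nf_mul, ← nf_mul]; exact congrArg nf h))

lemma R.mul_eq_one {u v : R} : u * v = 1 ↔ u = 1 ∧ v = 1 := by
  refine ⟨fun h => ?_, fun ⟨hu, hv⟩ => by rw [hu, hv, one_mul]⟩
  obtain rfl : u = 1 := by
    induction u using R.induction_on with
    | one => rfl
    | gen_mul g r _ =>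
      have := congrArg nf h
      rw [nf_mul, act_mul, act_gen] at this
      exact absurd this (consNF_ne_nil _ _)
  exact ⟨rfl, by rwa [one_mul] at h⟩

lemma gen_ne_one (g : Gen) : gen g ≠ 1 := fun h =>
  consNF_ne_nil g [] (nf_eq_nil.mpr h)

lemma consNF_of_ne_b {z : Gen} (hz : z ≠ .b) (g : Gen) (U : List Gen) :
    consNF g (z :: U) = g :: z :: U :=
  consNF_of_forall fun _ _ _ h => absurd (List.cons.inj h).1 hz

lemma consNF_eq_append_cons {g : Gen} {U A T : List Gen} {ℓ : Fam} {m : ℤ}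
    (h : consNF g U = A ++ ℓ.gen m :: T) :
    (A = [] ∧ g = ℓ.gen m) ∨ ∃ A' m', U = A' ++ ℓ.gen m' :: T := by
  rcases consNF_cases g U with hU | ⟨ℓ', n, t, k, rfl, -, hU⟩ <;> rw [hU] at h
  · rcases A with _ | ⟨z, A⟩
    · exact .inl ⟨rfl, (List.cons.inj h).1⟩
    · exact .inr ⟨A, m, (List.cons.inj h).2⟩
  · rcases A with _ | ⟨a₀, _ | ⟨a₁, A⟩⟩
    · exact absurd (List.cons.inj h).1 (Fam.gen_ne_b _ _).symm
    · simp only [List.cons_append, List.nil_append, List.cons.injEq, Fam.gen_inj] at h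
      obtain ⟨rfl, ⟨rfl, -⟩, rfl⟩ := h
      exact .inr ⟨[.b], n, rfl⟩
    · simp only [List.cons_append, List.cons.injEq] at h
      exact .inr ⟨.b :: ℓ'.gen n :: A, m, by rw [h.2.2]; rfl⟩

lemma consNF_b_gen_of_ne_nil {t : List Gen} (ht : t ≠ []) (g : Gen) (ℓ : Fam) (n : ℤ) :
    consNF g (.b :: ℓ.gen n :: t) = (absorbShift g ℓ false).elim (g :: .b :: ℓ.gen n :: t)
      fun k => .b :: ℓ.gen (n + k) :: t := by
  rw [consNF_b_gen, List.isEmpty_eq_false_iff.mpr ht]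

lemma consNF_cons_cons (g a₀ a₁ : Gen) :
    ∃ P, ∀ S, S ≠ [] → consNF g (a₀ :: a₁ :: S) = P ++ S := by
  by_cases h : a₀ = .b ∧ ∃ (ℓ : Fam) (n : ℤ), a₁ = ℓ.gen n
  · obtain ⟨rfl, ℓ, n, rfl⟩ := h
    cases hk : absorbShift g ℓ false with
    | none => exact ⟨[g, .b, ℓ.gen n], fun S hS => by simp [consNF_b_gen_of_ne_nil hS, hk]⟩
    | some k => exact ⟨[.b, ℓ.gen (n + k)], fun S hS => by simp [consNF_b_gen_of_ne_nil hS, hk]⟩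
  · refine ⟨[g, a₀, a₁], fun S _ => consNF_of_forall fun ℓ n t hS => ?_⟩
    simp only [List.cons.injEq] at hS
    exact absurd ⟨hS.1, ℓ, n, hS.2.1⟩ h

lemma consNF_append_cons (g : Gen) (A : List Gen) (ℓ : Fam) :
    ∃ A' δ, ∀ n T, T ≠ [] → consNF g (A ++ ℓ.gen n :: T) = A' ++ ℓ.gen (n + δ) :: T := by
  rcases A with _ | ⟨a₀, _ | ⟨a₁, A⟩⟩
  · exact ⟨[g], 0, fun n T _ => by simp [consNF_of_ne_b (Fam.gen_ne_b ℓ n)]⟩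
  · by_cases ha : a₀ = .b
    · subst ha
      cases hk : absorbShift g ℓ false with
      | none => exact ⟨[g, .b], 0, fun n T hT => by simp [consNF_b_gen_of_ne_nil hT, hk]⟩
      | some k => exact ⟨[.b], k, fun n T hT => by simp [consNF_b_gen_of_ne_nil hT, hk]⟩
    · exact ⟨[g, a₀], 0, fun n T _ => by simp [consNF_of_ne_b ha]⟩
  · obtain ⟨P, hP⟩ := consNF_cons_cons g a₀ a₁
    exact ⟨P ++ A, 0, fun n T _ => by simp [hP]⟩

lemma absorbShift_x_true_eq_none_iff (g : Gen) :
    absorbShift g .x true = none ↔ absorbShift g .y true = none := by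
  cases g <;> simp [absorbShift]

/-- Unlike in `consNF_append_cons`, the new prefix `C'` is the same for both families: this is
why two letters `x` in a constructible ideal force all letters `y`. -/
lemma consNF_append_singleton (g : Gen) (C : List Gen) :
    ∃ (C' : List Gen) (δ : Fam → ℤ), ∀ (ℓ : Fam) n,
      consNF g (C ++ [ℓ.gen n]) = C' ++ [ℓ.gen (n + δ ℓ)] := by
  rcases C with _ | ⟨a₀, _ | ⟨a₁, C⟩⟩
  · exact ⟨[g], 0, fun ℓ n => by simp [consNF_of_ne_b (Fam.gen_ne_b ℓ n)]⟩
  · by_cases ha : a₀ = .b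
    · subst ha
      cases hx : absorbShift g .x true with
      | none =>
        have hy := (absorbShift_x_true_eq_none_iff g).mp hx
        exact ⟨[g, .b], 0, fun ℓ n => by cases ℓ <;> simp [consNF_b_gen, hx, hy]⟩
      | some kx =>
        obtain ⟨ky, hy⟩ := Option.ne_none_iff_exists'.mp
          (mt (absorbShift_x_true_eq_none_iff g).mpr (by simp [hx]))
        exact ⟨[.b], fun | .x => kx | .y => ky, fun ℓ n => by
          cases ℓ <;> simp [consNF_b_gen, hx, hy]⟩
    · exact ⟨[g, a₀], 0, fun ℓ n => by simp [consNF_of_ne_b ha]⟩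
  · obtain ⟨P, hP⟩ := consNF_cons_cons g a₀ a₁
    exact ⟨P ++ C, 0, fun ℓ n => by simp [hP]⟩

lemma exists_act_cons (w : R) (ℓ : Fam) :
    ∃ A j, ∀ n T, T ≠ [] → act w (ℓ.gen n :: T) = A ++ ℓ.gen (n + j) :: T := by
  induction w using R.induction_on with
  | one => exact ⟨[], 0, by simp⟩
  | gen_mul g r ih =>
    obtain ⟨A, j, hA⟩ := ih
    obtain ⟨A', δ, hA'⟩ := consNF_append_cons g A ℓ
    exact ⟨A', j + δ, fun n T hT => by rw [act_mul, act_gen, hA n T hT, hA' _ _ hT, add_assoc]⟩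

lemma exists_act_singleton (w : R) :
    ∃ (C : List Gen) (j : Fam → ℤ), ∀ (ℓ : Fam) n,
      act w [ℓ.gen n] = C ++ [ℓ.gen (n + j ℓ)] := by
  induction w using R.induction_on with
  | one => exact ⟨[], 0, by simp⟩
  | gen_mul g r ih =>
    obtain ⟨C, j, hC⟩ := ih
    obtain ⟨C', δ, hC'⟩ := consNF_append_singleton g C
    exact ⟨C', j + δ, fun ℓ n => by rw [act_mul, act_gen, hC, hC', Pi.add_apply, add_assoc]⟩

lemma nf_mul_gen_mul (w : R) (ℓ : Fam) (n : ℤ) (t : R) :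
    nf (w * gen (ℓ.gen n) * t) = act w (ℓ.gen n :: nf t) := by
  rw [mul_assoc, nf_mul, nf_mul, act_gen, consNF_gen]

lemma nf_mul_gen (w : R) (ℓ : Fam) (n : ℤ) : nf (w * gen (ℓ.gen n)) = act w [ℓ.gen n] := by
  simpa using nf_mul_gen_mul w ℓ n 1

lemma mul_gen_mul_eq_of_eq {v w t₀ t : R} {ℓ : Fam} {m n₀ : ℤ} (ht₀ : t₀ ≠ 1)
    (h : v * gen (ℓ.gen m) * t₀ = w * gen (ℓ.gen n₀) * t₀) (n : ℤ) (ht : t ≠ 1) :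
    v * gen (ℓ.gen (n + (m - n₀))) * t = w * gen (ℓ.gen n) * t := by
  obtain ⟨A₁, j₁, hv⟩ := exists_act_cons v ℓ
  obtain ⟨A₂, j₂, hw⟩ := exists_act_cons w ℓ
  replace h := congrArg nf h
  rw [nf_mul_gen_mul, nf_mul_gen_mul, hv _ _ (mt nf_eq_nil.mp ht₀),
    hw _ _ (mt nf_eq_nil.mp ht₀)] at h
  obtain ⟨rfl, hj⟩ := List.append_inj' h (by simp)
  obtain ⟨-, hj⟩ := Fam.gen_inj.mp (List.cons.inj hj).1
  apply nf_injective
  rw [nf_mul_gen_mul, nf_mul_gen_mul, hv _ _ (mt nf_eq_nil.mp ht), hw _ _ (mt nf_eq_nil.mp ht)]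
  congr 3
  omega

lemma exists_mul_gen_eq_of_eq {v w : R} {ℓ : Fam} {m n₀ : ℤ}
    (h : v * gen (ℓ.gen m) = w * gen (ℓ.gen n₀)) (ℓ' : Fam) :
    ∃ k, ∀ n, v * gen (ℓ'.gen (n + k)) = w * gen (ℓ'.gen n) := by
  obtain ⟨C₁, j₁, hv⟩ := exists_act_singleton v
  obtain ⟨C₂, j₂, hw⟩ := exists_act_singleton w
  replace h := congrArg nf h
  rw [nf_mul_gen, nf_mul_gen, hv, hw] at h
  obtain ⟨rfl, -⟩ := List.append_inj' h (by simp)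
  refine ⟨j₂ ℓ' - j₁ ℓ', fun n => nf_injective ?_⟩
  rw [nf_mul_gen, nf_mul_gen, hv, hw]
  congr 3
  omega

def UniformOnTails (ℓ : Fam) (h : R → Option R) : Prop :=
  ∀ r n₁ n₂ t₁ t₂, n₁ ≠ n₂ → t₁ ≠ 1 → t₂ ≠ 1 →
    h (r * gen (ℓ.gen n₁) * t₁) ≠ none → h (r * gen (ℓ.gen n₂) * t₂) ≠ none →
    ∃ e k, ∀ n t, t ≠ 1 → h (r * gen (ℓ.gen n) * t) = some (e * gen (ℓ.gen (n + k)) * t)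

def UniformOnLetters (ℓ : Fam) (h : R → Option R) : Prop :=
  ∀ r n₁ n₂, n₁ ≠ n₂ → h (r * gen (ℓ.gen n₁)) ≠ none → h (r * gen (ℓ.gen n₂)) ≠ none →
    ∃ e, ∀ ℓ' : Fam, ∃ k, ∀ n, h (r * gen (ℓ'.gen n)) = some (e * gen (ℓ'.gen (n + k)))

theorem InInvHull.induction_gen {Φ : (R → Option R) → Prop}
    (hcomp : ∀ g f, Φ g → Φ f → Φ (pcomp g f)) (htransl : ∀ s, Φ (ptransl s))
    (hgen : ∀ g, Φ (pinv (ptransl (gen g)))) {h : R → Option R} (hh : InInvHull h) : Φ h := by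
  refine hh.induction hcomp htransl fun q => ?_
  induction q using R.induction_on with
  | one => simpa [pinv_ptransl_one] using htransl 1
  | gen_mul g r ih => simpa [pinv_ptransl_mul] using hcomp _ _ ih (hgen g)

section UniformOnTails

variable {ℓ : Fam}

lemma UniformOnTails.pcomp {g f : R → Option R} (hg : UniformOnTails ℓ g)
    (hf : UniformOnTails ℓ f) : UniformOnTails ℓ (pcomp g f) := by
  intro r n₁ n₂ t₁ t₂ hn ht₁ ht₂ h₁ h₂
  obtain ⟨v₁, hv₁, hg₁⟩ := pcomp_ne_none.mp h₁
  obtain ⟨v₂, hv₂, hg₂⟩ := pcomp_ne_none.mp h₂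
  obtain ⟨e, k, hf'⟩ := hf r n₁ n₂ t₁ t₂ hn ht₁ ht₂ (by simp [hv₁]) (by simp [hv₂])
  rw [hf' _ _ ht₁, Option.some.injEq] at hv₁
  rw [hf' _ _ ht₂, Option.some.injEq] at hv₂
  subst hv₁ hv₂
  obtain ⟨e', k', hg'⟩ := hg e (n₁ + k) (n₂ + k) t₁ t₂ (by omega) ht₁ ht₂ hg₁ hg₂
  exact ⟨e', k + k', fun n t ht => by rw [pcomp_apply, hf' n t ht, Option.bind_some, hg' _ t ht,
    add_assoc]⟩

lemma uniformOnTails_ptransl (s : R) : UniformOnTails ℓ (ptransl s) :=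
  fun r _ _ _ _ _ _ _ _ _ => ⟨s * r, 0, fun n t _ => by simp [ptransl, mul_assoc]⟩

lemma uniformOnTails_pinv_ptransl_gen (g : Gen) : UniformOnTails ℓ (pinv (ptransl (gen g))) := by
  intro r n₁ n₂ t₁ t₂ hn ht₁ ht₂ h₁ h₂
  obtain ⟨u₁, hu₁⟩ := Option.ne_none_iff_exists'.mp h₁
  obtain ⟨u₂, hu₂⟩ := Option.ne_none_iff_exists'.mp h₂
  rw [pinv_ptransl_eq_some] at hu₁ hu₂
  suffices ∃ e m n₀ t₀, t₀ ≠ 1 ∧ gen g * e * gen (ℓ.gen m) * t₀ = r * gen (ℓ.gen n₀) * t₀ by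
    obtain ⟨e, m, n₀, t₀, ht₀, h⟩ := this
    refine ⟨e, m - n₀, fun n t ht => pinv_ptransl_eq_some.mpr ?_⟩
    simpa only [mul_assoc] using mul_gen_mul_eq_of_eq ht₀ h n ht
  obtain ⟨A, j, hA⟩ := exists_act_cons r ℓ
  have gen_or_factor : ∀ {n u t}, t ≠ 1 → gen g * u = r * gen (ℓ.gen n) * t →
      g = ℓ.gen (n + j) ∨ ∃ e m, u = e * gen (ℓ.gen m) * t := by
    intro n u t ht h
    replace h := congrArg nf h
    rw [nf_mul, act_gen, nf_mul_gen_mul, hA _ _ (mt nf_eq_nil.mp ht)] at h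
    rcases consNF_eq_append_cons h with ⟨-, hg⟩ | ⟨A', m, hu⟩
    · exact .inl hg
    · exact .inr ⟨(A'.map gen).prod, m, by rw [← prod_map_gen_nf u, hu]; simp [mul_assoc]⟩
  rcases gen_or_factor ht₁ hu₁ with hg₁ | ⟨e, m, rfl⟩
  · rcases gen_or_factor ht₂ hu₂ with hg₂ | ⟨e, m, rfl⟩
    · exact absurd (Fam.gen_inj.mp (hg₁.symm.trans hg₂)).2 (by omega)
    · exact ⟨e, m, n₂, t₂, ht₂, by simpa only [mul_assoc] using hu₂⟩
  · exact ⟨e, m, n₁, t₁, ht₁, by simpa only [mul_assoc] using hu₁⟩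

lemma InInvHull.uniformOnTails {h : R → Option R} (hh : InInvHull h) : UniformOnTails ℓ h :=
  hh.induction_gen (fun _ _ => .pcomp) uniformOnTails_ptransl uniformOnTails_pinv_ptransl_gen

end UniformOnTails

section UniformOnLetters

variable {ℓ : Fam}

lemma UniformOnLetters.pcomp {g f : R → Option R} (hg : UniformOnLetters ℓ g)
    (hf : UniformOnLetters ℓ f) : UniformOnLetters ℓ (pcomp g f) := by
  intro r n₁ n₂ hn h₁ h₂
  obtain ⟨v₁, hv₁, hg₁⟩ := pcomp_ne_none.mp h₁
  obtain ⟨v₂, hv₂, hg₂⟩ := pcomp_ne_none.mp h₂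
  obtain ⟨e, hf'⟩ := hf r n₁ n₂ hn (by simp [hv₁]) (by simp [hv₂])
  obtain ⟨k, hk⟩ := hf' ℓ
  rw [hk, Option.some.injEq] at hv₁ hv₂
  subst hv₁ hv₂
  obtain ⟨e', hg'⟩ := hg e (n₁ + k) (n₂ + k) (by omega) hg₁ hg₂
  refine ⟨e', fun ℓ' => ?_⟩
  obtain ⟨k₁, hk₁⟩ := hf' ℓ'
  obtain ⟨k₂, hk₂⟩ := hg' ℓ'
  exact ⟨k₁ + k₂, fun n => by rw [pcomp_apply, hk₁, Option.bind_some, hk₂, add_assoc]⟩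

lemma uniformOnLetters_ptransl (s : R) : UniformOnLetters ℓ (ptransl s) :=
  fun r _ _ _ _ _ => ⟨s * r, fun _ => ⟨0, fun n => by simp [ptransl, mul_assoc]⟩⟩

lemma uniformOnLetters_pinv_ptransl_gen (g : Gen) :
    UniformOnLetters ℓ (pinv (ptransl (gen g))) := by
  intro r n₁ n₂ hn h₁ h₂
  obtain ⟨u₁, hu₁⟩ := Option.ne_none_iff_exists'.mp h₁
  obtain ⟨u₂, hu₂⟩ := Option.ne_none_iff_exists'.mp h₂
  rw [pinv_ptransl_eq_some] at hu₁ hu₂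
  suffices ∃ e m n₀, gen g * e * gen (ℓ.gen m) = r * gen (ℓ.gen n₀) by
    obtain ⟨e, m, n₀, h⟩ := this
    refine ⟨e, fun ℓ' => ?_⟩
    obtain ⟨k, hk⟩ := exists_mul_gen_eq_of_eq h ℓ'
    exact ⟨k, fun n => pinv_ptransl_eq_some.mpr (by rw [← mul_assoc, hk])⟩
  obtain ⟨C, j, hC⟩ := exists_act_singleton r
  have gen_or_factor : ∀ {n u}, gen g * u = r * gen (ℓ.gen n) →
      g = ℓ.gen (n + j ℓ) ∨ ∃ e m, u = e * gen (ℓ.gen m) := by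
    intro n u h
    replace h := congrArg nf h
    rw [nf_mul, act_gen, nf_mul_gen, hC] at h
    rcases consNF_eq_append_cons h with ⟨-, hg⟩ | ⟨C', m, hu⟩
    · exact .inl hg
    · exact .inr ⟨(C'.map gen).prod, m, by rw [← prod_map_gen_nf u, hu]; simp⟩
  rcases gen_or_factor hu₁ with hg₁ | ⟨e, m, rfl⟩
  · rcases gen_or_factor hu₂ with hg₂ | ⟨e, m, rfl⟩
    · exact absurd (Fam.gen_inj.mp (hg₁.symm.trans hg₂)).2 (by omega)
    · exact ⟨e, m, n₂, by simpa only [mul_assoc] using hu₂⟩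
  · exact ⟨e, m, n₁, by simpa only [mul_assoc] using hu₁⟩

lemma InInvHull.uniformOnLetters {h : R → Option R} (hh : InInvHull h) :
    UniformOnLetters ℓ h :=
  hh.induction_gen (fun _ _ => .pcomp) uniformOnLetters_ptransl uniformOnLetters_pinv_ptransl_gen

end UniformOnLetters

namespace IsConstructible

variable {X : Set R} {r : R} {ℓ : Fam} {n₁ n₂ : ℤ}

lemma mul_gen_mem (hX : IsConstructible X) (hn : n₁ ≠ n₂) (h₁ : r * gen (ℓ.gen n₁) ∈ X)
    (h₂ : r * gen (ℓ.gen n₂) ∈ X) (ℓ' : Fam) (n : ℤ) : r * gen (ℓ'.gen n) ∈ X := by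
  obtain ⟨h, hh, rfl⟩ := hX
  obtain ⟨e, he⟩ := hh.uniformOnLetters r n₁ n₂ hn h₁ h₂
  obtain ⟨k, hk⟩ := he ℓ'
  simp [pdom, hk]

lemma mul_gen_mul_mem (hX : IsConstructible X) (hn : n₁ ≠ n₂) {t₁ t₂ : R}
    (h₁ : r * gen (ℓ.gen n₁) * t₁ ∈ X) (h₂ : r * gen (ℓ.gen n₂) * t₂ ∈ X) (n : ℤ) {t : R}
    (ht : t ≠ 1) : r * gen (ℓ.gen n) * t ∈ X := by
  have hx : ∀ s : R, s * gen (.x 0) ≠ 1 := fun s => by simp [R.mul_eq_one, gen_ne_one]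
  have h₁' := hX.mul_mem_right h₁ (gen (.x 0))
  have h₂' := hX.mul_mem_right h₂ (gen (.x 0))
  obtain ⟨h, hh, rfl⟩ := hX
  obtain ⟨e, k, he⟩ := hh.uniformOnTails r n₁ n₂ _ _ hn (hx t₁) (hx t₂)
    (by rw [← mul_assoc]; exact h₁') (by rw [← mul_assoc]; exact h₂')
  simp [pdom, he n t ht]

end IsConstructible

/-- Let `r ∈ R` and let `A ∈ J(R)`.
(1) If `A` contains two elements `r·x_{n₁}`, `r·x_{n₂}` with `n₁ ≠ n₂` (or two elements
`r·y_{n₁}`, `r·y_{n₂}` with `n₁ ≠ n₂`), then `A` contains `r·x_n` and `r·y_n` for all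
`n ∈ ℤ`.
(2) If `A` contains `r·x_{n₁}·t₁` and `r·x_{n₂}·t₂` with `n₁ ≠ n₂`, then
`r·(⋃_{n, w' ≠ e} x_n w' R) ⊆ A`; symmetrically for `y`. -/
theorem cstar_stmt17 (r : R) (A : Set R) (hA : IsConstructible A) :
    ((∃ n₁ n₂ : ℤ, n₁ ≠ n₂ ∧
        ((r * gen (Gen.x n₁) ∈ A ∧ r * gen (Gen.x n₂) ∈ A) ∨
         (r * gen (Gen.y n₁) ∈ A ∧ r * gen (Gen.y n₂) ∈ A))) →
      ∀ n : ℤ, r * gen (Gen.x n) ∈ A ∧ r * gen (Gen.y n) ∈ A) ∧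
    ((∃ (n₁ n₂ : ℤ) (t₁ t₂ : R), n₁ ≠ n₂ ∧
        r * gen (Gen.x n₁) * t₁ ∈ A ∧ r * gen (Gen.x n₂) * t₂ ∈ A) →
      {z : R | ∃ (n : ℤ) (w' u : R), w' ≠ 1 ∧ z = r * gen (Gen.x n) * w' * u} ⊆ A) ∧
    ((∃ (n₁ n₂ : ℤ) (t₁ t₂ : R), n₁ ≠ n₂ ∧
        r * gen (Gen.y n₁) * t₁ ∈ A ∧ r * gen (Gen.y n₂) * t₂ ∈ A) →
      {z : R | ∃ (n : ℤ) (w' u : R), w' ≠ 1 ∧ z = r * gen (Gen.y n) * w' * u} ⊆ A) := by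
  have tails (ℓ : Fam) : (∃ (n₁ n₂ : ℤ) (t₁ t₂ : R), n₁ ≠ n₂ ∧
      r * gen (ℓ.gen n₁) * t₁ ∈ A ∧ r * gen (ℓ.gen n₂) * t₂ ∈ A) →
      {z : R | ∃ (n : ℤ) (w' u : R), w' ≠ 1 ∧ z = r * gen (ℓ.gen n) * w' * u} ⊆ A := by
    rintro ⟨n₁, n₂, t₁, t₂, hn, h₁, h₂⟩ _ ⟨n, w', u, hw', rfl⟩
    rw [mul_assoc _ w']
    exact hA.mul_gen_mul_mem hn h₁ h₂ n (by simp [R.mul_eq_one, hw'])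
  refine ⟨?_, tails .x, tails .y⟩
  rintro ⟨n₁, n₂, hn, ⟨h₁, h₂⟩ | ⟨h₁, h₂⟩⟩ n
  · exact ⟨hA.mul_gen_mem (ℓ := .x) hn h₁ h₂ .x n, hA.mul_gen_mem (ℓ := .x) hn h₁ h₂ .y n⟩
  · exact ⟨hA.mul_gen_mem (ℓ := .y) hn h₁ h₂ .x n, hA.mul_gen_mem (ℓ := .y) hn h₁ h₂ .y n⟩

end SgC
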